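/- A T0 topological space X is a continuous space if and only if the supremum map ⋁ : (I_T(X), Ω(I_T(X))) → X has a continuous lower adjoint, i.e., there exists a continuous map f : X → (I_T(X), Ω(I_T(X))) such that for all x ∈ X and all A ∈ I_T(X): f(x) ⊆ A if and only if x ⊑ sup A. -/

import Mathlib

open Set

section Defs

variable {X : Type*} [TopologicalSpace X]

/-- Specialization order: `x ⊑ y` iff `x ∈ closure {y}`. -/
def SOrd (x y : X) : Prop := x ∈ closure ({y} : Set X)

/-- `D` is a directed subset (w.r.t. the specialization order). -/
def IsDirSub (D : Set X) : Prop :=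
  D.Nonempty ∧ ∀ a ∈ D, ∀ b ∈ D, ∃ c ∈ D, SOrd a c ∧ SOrd b c

/-- `D` converges to `x`: every open neighbourhood of `x` meets `D`. -/
def ConvTo (D : Set X) (x : X) : Prop :=
  ∀ U : Set X, IsOpen U → x ∈ U → (D ∩ U).Nonempty

/-- `U` is directed-open. -/
def DirOpen (U : Set X) : Prop :=
  ∀ (D : Set X) (x : X), IsDirSub D → ConvTo D x → x ∈ U → (D ∩ U).Nonempty

/-- `x ≪ y` : `x` d-approximates `y`. -/
def WayBelow (x y : X) : Prop :=
  ∀ D : Set X, IsDirSub D → ConvTo D y → ∃ d ∈ D, SOrd x d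

/-- `↓x` w.r.t. the specialization order. -/
def dnSet (x : X) : Set X := {z | SOrd z x}

/-- `↑x` w.r.t. the specialization order. -/
def upSet (x : X) : Set X := {z | SOrd x z}

/-- `⇓y = {x | x ≪ y}`. -/
def wbSet (y : X) : Set X := {x | WayBelow x y}

/-- `x` is the least upper bound of `D` w.r.t. the specialization order. -/
def IsSupOf (x : X) (D : Set X) : Prop :=
  (∀ d ∈ D, SOrd d x) ∧ ∀ y : X, (∀ d ∈ D, SOrd d y) → SOrd x y

/-- A topological ideal: a directed lower set having a supremum and converging to it. -/
def IsTopIdeal (A : Set X) : Prop :=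
  IsDirSub A ∧ (∀ a ∈ A, ∀ z : X, SOrd z a → z ∈ A) ∧
    ∃ s : X, IsSupOf s A ∧ ConvTo A s

end Defs

/-- The set of d-compact elements of `X`. -/
def KSet (X : Type*) [TopologicalSpace X] : Set X := {x | WayBelow x x}

/-- A directed space: a T0 space in which every directed-open set is open. -/
def IsDirectedSpace (X : Type*) [TopologicalSpace X] : Prop :=
  T0Space X ∧ ∀ U : Set X, DirOpen U → IsOpen U

/-- An algebraic space. -/
def IsAlgebraicSpace (X : Type*) [TopologicalSpace X] : Prop :=
  IsDirectedSpace X ∧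
    ∀ x : X, IsDirSub (dnSet x ∩ KSet X) ∧ ConvTo (dnSet x ∩ KSet X) x

/-- A continuous space. -/
def IsContinuousSpace (X : Type*) [TopologicalSpace X] : Prop :=
  IsDirectedSpace X ∧ ∀ x : X, ∃ D ⊆ wbSet x, IsDirSub D ∧ ConvTo D x

/-- A b-space. -/
def IsBSpace (X : Type*) [TopologicalSpace X] : Prop :=
  ∀ U : Set X, IsOpen U → ∀ x ∈ U,
    ∃ y : X, x ∈ interior (upSet y) ∧ interior (upSet y) = upSet y ∧ upSet y ⊆ U

/-- `B` is a basis of the directed space `X`. -/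
def IsBasisOf (X : Type*) [TopologicalSpace X] (B : Set X) : Prop :=
  ∀ x : X, IsDirSub (wbSet x ∩ B) ∧ ConvTo (wbSet x ∩ B) x

/-- The set of topological ideals of `X`. -/
def TopIdeal (X : Type*) [TopologicalSpace X] : Type _ := {A : Set X // IsTopIdeal A}

/-- Membership in the topology `Ω(I_T(X))`. -/
def OmegaOpen {X : Type*} [TopologicalSpace X] (𝒰 : Set (TopIdeal X)) : Prop :=
  ∀ A : TopIdeal X, A ∈ 𝒰 ↔
    ∃ B : TopIdeal X, (∃ x : X, B.1 = dnSet x) ∧ B ∈ 𝒰 ∧ B.1 ⊆ A.1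

theorem sOrd_refl {X : Type*} [TopologicalSpace X] (x : X) : SOrd x x :=
  subset_closure rfl

theorem sOrd_trans {X : Type*} [TopologicalSpace X] {x y z : X}
    (h1 : SOrd x y) (h2 : SOrd y z) : SOrd x z :=
  (closure_minimal (Set.singleton_subset_iff.mpr h2) isClosed_closure) h1

theorem principal_isTopIdeal {X : Type*} [TopologicalSpace X] (x : X) :
    IsTopIdeal (dnSet x) := by
  refine ⟨⟨⟨x, sOrd_refl x⟩, ?_⟩, ?_, x, ⟨?_, ?_⟩, ?_⟩
  · intro a ha b hb
    exact ⟨x, sOrd_refl x, ha, hb⟩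
  · intro a ha z hz
    exact sOrd_trans hz ha
  · intro d hd; exact hd
  · intro y hy; exact hy x (sOrd_refl x)
  · intro U _ hxU
    exact ⟨x, sOrd_refl x, hxU⟩

/-- The topology `Ω(I_T(X))` on the set of topological ideals. -/
def OmegaTop (X : Type*) [TopologicalSpace X] : TopologicalSpace (TopIdeal X) where
  IsOpen := OmegaOpen
  isOpen_univ := by
    intro A
    constructor
    · intro _
      obtain ⟨⟨a, ha⟩, -⟩ := A.2.1
      refine ⟨⟨dnSet a, principal_isTopIdeal a⟩, ⟨a, rfl⟩, trivial, ?_⟩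
      intro z hz
      exact A.2.2.1 a ha z hz
    · intro _
      trivial
  isOpen_inter := by
    intro 𝒰 𝒱 h𝒰 h𝒱 A
    constructor
    · rintro ⟨hAU, hAV⟩
      obtain ⟨B1, ⟨x, hx⟩, hB1U, hB1A⟩ := (h𝒰 A).mp hAU
      obtain ⟨B2, ⟨y, hy⟩, hB2V, hB2A⟩ := (h𝒱 A).mp hAV
      have hxA : x ∈ A.1 := hB1A (by rw [hx]; exact sOrd_refl x)
      have hyA : y ∈ A.1 := hB2A (by rw [hy]; exact sOrd_refl y)
      obtain ⟨c, hcA, hxc, hyc⟩ := A.2.1.2 x hxA y hyA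
      have hsubU : B1.1 ⊆ dnSet c := by
        rw [hx]; intro z hz; exact sOrd_trans hz hxc
      have hsubV : B2.1 ⊆ dnSet c := by
        rw [hy]; intro z hz; exact sOrd_trans hz hyc
      have hcU : (⟨dnSet c, principal_isTopIdeal c⟩ : TopIdeal X) ∈ 𝒰 :=
        (h𝒰 _).mpr ⟨B1, ⟨x, hx⟩, hB1U, hsubU⟩
      have hcV : (⟨dnSet c, principal_isTopIdeal c⟩ : TopIdeal X) ∈ 𝒱 :=
        (h𝒱 _).mpr ⟨B2, ⟨y, hy⟩, hB2V, hsubV⟩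
      exact ⟨⟨dnSet c, principal_isTopIdeal c⟩, ⟨c, rfl⟩, ⟨hcU, hcV⟩,
        fun z hz => A.2.2.1 c hcA z hz⟩
    · rintro ⟨B, hBp, ⟨hBU, hBV⟩, hBA⟩
      exact ⟨(h𝒰 A).mpr ⟨B, hBp, hBU, hBA⟩, (h𝒱 A).mpr ⟨B, hBp, hBV, hBA⟩⟩
  isOpen_sUnion := by
    intro S hS A
    constructor
    · rintro ⟨𝒰, h𝒰S, hA𝒰⟩
      obtain ⟨B, hBp, hB𝒰, hBA⟩ := (hS 𝒰 h𝒰S A).mp hA𝒰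
      exact ⟨B, hBp, ⟨𝒰, h𝒰S, hB𝒰⟩, hBA⟩
    · rintro ⟨B, hBp, ⟨𝒰, h𝒰S, hB𝒰⟩, hBA⟩
      exact ⟨𝒰, h𝒰S, (hS 𝒰 h𝒰S A).mpr ⟨B, hBp, hB𝒰, hBA⟩⟩

instance (X : Type*) [TopologicalSpace X] : TopologicalSpace (TopIdeal X) :=
  OmegaTop X

/-!
If `X` is continuous, `x ↦ ⇓x` is the lower adjoint: `⇓x` converges to `x`, so it lies in an
ideal `A` exactly when `A` converges to `x`, i.e. when `x ⊑ sup A`. It is continuous because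
way-below interpolates, so `b ≪ x` is witnessed by `b ≪ c ≪ x` and `c` is eventually below
every directed set converging to `x`.

Conversely, adjointness forces `f x ⊆ ↓x` and `f x → x`. The sets `{A | A ∩ U ≠ ∅}` are
`Ω`-open for every `U`, so continuity of `f` makes a directed-open `U` open, as
`U = {x | f x ∩ U ≠ ∅}`; and for `a ∈ f x`, continuity at `x` puts `a` into `f d ⊆ ↓d` for some
`d` of any directed set converging to `x`, whence `a ≪ x`.
-/

section SpecializationOrder

variable {X : Type*} [TopologicalSpace X]

theorem sOrd_iff_specializes {x y : X} : SOrd x y ↔ y ⤳ x :=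
  specializes_iff_mem_closure.symm

theorem SOrd.mem_open {x y : X} {U : Set X} (h : SOrd x y) (hU : IsOpen U) (hx : x ∈ U) :
    y ∈ U :=
  (sOrd_iff_specializes.mp h).mem_open hU hx

theorem SOrd.antisymm [T0Space X] {x y : X} (hxy : SOrd x y) (hyx : SOrd y x) : x = y :=
  ((sOrd_iff_specializes.mp hyx).antisymm (sOrd_iff_specializes.mp hxy)).eq

theorem isDirSub_singleton (x : X) : IsDirSub ({x} : Set X) :=
  ⟨singleton_nonempty x, by rintro _ rfl _ rfl; exact ⟨_, rfl, sOrd_refl _, sOrd_refl _⟩⟩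

theorem ConvTo.mono {D E : Set X} {x : X} (h : ConvTo D x) (hDE : D ⊆ E) : ConvTo E x :=
  fun U hU hx => (h U hU hx).mono (inter_subset_inter_left U hDE)

theorem ConvTo.of_sOrd {D : Set X} {x s : X} (h : ConvTo D s) (hxs : SOrd x s) :
    ConvTo D x :=
  fun U hU hx => h U hU (hxs.mem_open hU hx)

theorem ConvTo.sOrd_of_forall_sOrd {D : Set X} {x y : X} (h : ConvTo D x)
    (hy : ∀ d ∈ D, SOrd d y) : SOrd x y := by
  refine sOrd_iff_specializes.mpr (specializes_iff_forall_open.mpr fun U hU hx => ?_)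
  obtain ⟨d, hd, hdU⟩ := h U hU hx
  exact (hy d hd).mem_open hU hdU

theorem ConvTo.isSupOf {D : Set X} {x : X} (h : ConvTo D x) (hx : ∀ d ∈ D, SOrd d x) :
    IsSupOf x D :=
  ⟨hx, fun _ => h.sOrd_of_forall_sOrd⟩

theorem IsSupOf.unique [T0Space X] {D : Set X} {s t : X} (hs : IsSupOf s D)
    (ht : IsSupOf t D) : s = t :=
  (hs.2 t ht.1).antisymm (ht.2 s hs.1)

theorem DirOpen.mem_of_sOrd {U : Set X} (hU : DirOpen U) {a x : X} (ha : a ∈ U)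
    (hax : SOrd a x) : x ∈ U := by
  obtain ⟨d, rfl, hdU⟩ :=
    hU {x} a (isDirSub_singleton x) (fun V hV haV => ⟨x, rfl, hax.mem_open hV haV⟩) ha
  exact hdU

end SpecializationOrder

section WayBelow

variable {X : Type*} [TopologicalSpace X]

theorem WayBelow.sOrd {x y : X} (h : WayBelow x y) : SOrd x y := by
  obtain ⟨d, rfl, hxd⟩ := h {y} (isDirSub_singleton y) (fun _ _ hy => ⟨y, rfl, hy⟩)
  exact hxd

theorem WayBelow.of_sOrd_left {z x y : X} (hzx : SOrd z x) (h : WayBelow x y) :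
    WayBelow z y := fun D hD hconv =>
  let ⟨d, hd, hxd⟩ := h D hD hconv
  ⟨d, hd, sOrd_trans hzx hxd⟩

theorem WayBelow.of_sOrd_right {x y y' : X} (h : WayBelow x y) (hyy' : SOrd y y') :
    WayBelow x y' := fun D hD hconv => h D hD (hconv.of_sOrd hyy')

theorem wbSet_subset_of_convTo {A : Set X} {x : X} (hdir : IsDirSub A)
    (hlower : ∀ a ∈ A, ∀ z : X, SOrd z a → z ∈ A) (hconv : ConvTo A x) : wbSet x ⊆ A :=
  fun _ ha =>
  let ⟨d, hd, had⟩ := ha A hdir hconv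
  hlower d hd _ had

theorem isDirSub_wbSet {D : Set X} {x : X} (hD : D ⊆ wbSet x) (hdir : IsDirSub D)
    (hconv : ConvTo D x) : IsDirSub (wbSet x) := by
  refine ⟨hdir.1.mono hD, fun a ha b hb => ?_⟩
  obtain ⟨d₁, hd₁, had₁⟩ := ha D hdir hconv
  obtain ⟨d₂, hd₂, hbd₂⟩ := hb D hdir hconv
  obtain ⟨c, hc, hd₁c, hd₂c⟩ := hdir.2 d₁ hd₁ d₂ hd₂
  exact ⟨c, hD hc, sOrd_trans had₁ hd₁c, sOrd_trans hbd₂ hd₂c⟩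

theorem isTopIdeal_wbSet_of_convTo {D : Set X} {x : X} (hD : D ⊆ wbSet x) (hdir : IsDirSub D)
    (hconv : ConvTo D x) : IsTopIdeal (wbSet x) :=
  have hconv' : ConvTo (wbSet x) x := hconv.mono hD
  ⟨isDirSub_wbSet hD hdir hconv, fun _ ha _ hz => ha.of_sOrd_left hz, x,
    hconv'.isSupOf fun _ => WayBelow.sOrd, hconv'⟩

end WayBelow

namespace TopIdeal

variable {X : Type*} [TopologicalSpace X]

def principal (x : X) : TopIdeal X := ⟨dnSet x, principal_isTopIdeal x⟩

theorem dnSet_subset (A : TopIdeal X) {a : X} (ha : a ∈ A.1) : dnSet a ⊆ A.1 :=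
  fun z hz => A.2.2.1 a ha z hz

theorem isOpen_iff {𝒰 : Set (TopIdeal X)} :
    IsOpen 𝒰 ↔ ∀ A : TopIdeal X, A ∈ 𝒰 ↔ ∃ b ∈ A.1, principal b ∈ 𝒰 := by
  refine forall_congr' fun A => iff_congr Iff.rfl ⟨?_, ?_⟩
  · rintro ⟨B, ⟨b, hB⟩, hB𝒰, hBA⟩
    obtain rfl : B = principal b := Subtype.ext hB
    exact ⟨b, hBA (sOrd_refl b), hB𝒰⟩
  · rintro ⟨b, hb, hb𝒰⟩
    exact ⟨principal b, ⟨b, rfl⟩, hb𝒰, A.dnSet_subset hb⟩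

theorem isOpen_setOf_inter_nonempty (U : Set X) :
    IsOpen {A : TopIdeal X | (A.1 ∩ U).Nonempty} := by
  refine isOpen_iff.mpr fun A => ⟨fun ⟨a, haA, haU⟩ => ⟨a, haA, a, sOrd_refl a, haU⟩, ?_⟩
  rintro ⟨b, hb, c, hcb, hcU⟩
  exact ⟨c, A.dnSet_subset hb hcb, hcU⟩

theorem isOpen_setOf_mem (a : X) : IsOpen {A : TopIdeal X | a ∈ A.1} := by
  simpa only [inter_singleton_nonempty] using isOpen_setOf_inter_nonempty {a}

theorem convTo_of_isSupOf [T0Space X] (A : TopIdeal X) {s : X} (hs : IsSupOf s A.1) :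
    ConvTo A.1 s := by
  obtain ⟨t, ht, hconv⟩ := A.2.2.2
  rwa [ht.unique hs] at hconv

end TopIdeal

def IsLowerAdjointOfSup {X : Type*} [TopologicalSpace X] (f : X → TopIdeal X) : Prop :=
  ∀ (x : X) (A : TopIdeal X) (s : X), IsSupOf s A.1 → ((f x).1 ⊆ A.1 ↔ SOrd x s)

def HasApproximations (X : Type*) [TopologicalSpace X] : Prop :=
  ∀ x : X, ∃ D ⊆ wbSet x, IsDirSub D ∧ ConvTo D x

namespace HasApproximations

variable {X : Type*} [TopologicalSpace X]

theorem isTopIdeal_wbSet (h : HasApproximations X) (x : X) : IsTopIdeal (wbSet x) :=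
  let ⟨_, hD, hdir, hconv⟩ := h x
  isTopIdeal_wbSet_of_convTo hD hdir hconv

theorem convTo_wbSet (h : HasApproximations X) (x : X) : ConvTo (wbSet x) x :=
  let ⟨_, hD, _, hconv⟩ := h x
  hconv.mono hD

theorem exists_wayBelow_wayBelow (h : HasApproximations X) {b x : X} (hb : WayBelow b x) :
    ∃ c, WayBelow b c ∧ WayBelow c x := by
  -- `b ≪ x` meets `E = ⋃ d ≪ x, ⇓d`, which is directed and converges to `x`.
  set E : Set X := ⋃ d ∈ wbSet x, wbSet d
  have hEdir : IsDirSub E := by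
    obtain ⟨d, hd⟩ := (h.isTopIdeal_wbSet x).1.1
    refine ⟨(h.isTopIdeal_wbSet d).1.1.mono (subset_biUnion_of_mem (u := wbSet) hd), ?_⟩
    intro e₁ he₁ e₂ he₂
    obtain ⟨d₁, hd₁, he₁d₁⟩ := mem_iUnion₂.mp he₁
    obtain ⟨d₂, hd₂, he₂d₂⟩ := mem_iUnion₂.mp he₂
    obtain ⟨d, hd, hd₁d, hd₂d⟩ := (h.isTopIdeal_wbSet x).1.2 d₁ hd₁ d₂ hd₂
    obtain ⟨c, hc, he₁c, he₂c⟩ := (h.isTopIdeal_wbSet d).1.2 e₁ (he₁d₁.of_sOrd_right hd₁d)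
      e₂ (he₂d₂.of_sOrd_right hd₂d)
    exact ⟨c, mem_biUnion hd hc, he₁c, he₂c⟩
  have hEconv : ConvTo E x := by
    intro U hU hxU
    obtain ⟨d, hd, hdU⟩ := h.convTo_wbSet x U hU hxU
    obtain ⟨e, he, heU⟩ := h.convTo_wbSet d U hU hdU
    exact ⟨e, mem_biUnion hd he, heU⟩
  obtain ⟨e, he, hbe⟩ := hb E hEdir hEconv
  obtain ⟨d, hd, hed⟩ := mem_iUnion₂.mp he
  exact ⟨d, hed.of_sOrd_left hbe, hd⟩

def wbIdeal (h : HasApproximations X) (x : X) : TopIdeal X := ⟨wbSet x, h.isTopIdeal_wbSet x⟩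

theorem isLowerAdjointOfSup_wbIdeal [T0Space X] (h : HasApproximations X) :
    IsLowerAdjointOfSup h.wbIdeal := by
  intro x A s hs
  refine ⟨fun hsub => (h.convTo_wbSet x).sOrd_of_forall_sOrd fun d hd => hs.1 d (hsub hd),
    fun hxs => ?_⟩
  exact wbSet_subset_of_convTo A.2.1 A.2.2.1 ((A.convTo_of_isSupOf hs).of_sOrd hxs)

theorem continuous_wbIdeal (h : IsContinuousSpace X) : Continuous (wbIdeal h.2) := by
  refine continuous_def.mpr fun 𝒰 h𝒰 => h.1.2 _ fun D x hdir hconv hx => ?_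
  obtain ⟨b, hbx, hb𝒰⟩ := (TopIdeal.isOpen_iff.mp h𝒰 _).mp hx
  obtain ⟨c, hbc, hcx⟩ := exists_wayBelow_wayBelow h.2 hbx
  obtain ⟨d, hd, hcd⟩ := hcx D hdir hconv
  exact ⟨d, hd, (TopIdeal.isOpen_iff.mp h𝒰 _).mpr ⟨b, hbc.of_sOrd_right hcd, hb𝒰⟩⟩

end HasApproximations

namespace IsLowerAdjointOfSup

variable {X : Type*} [TopologicalSpace X] {f : X → TopIdeal X}

theorem subset_dnSet (hf : IsLowerAdjointOfSup f) (x : X) : (f x).1 ⊆ dnSet x :=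
  (hf x (TopIdeal.principal x) x ⟨fun _ hd => hd, fun _ hy => hy x (sOrd_refl x)⟩).mpr
    (sOrd_refl x)

theorem convTo [T0Space X] (hf : IsLowerAdjointOfSup f) (x : X) : ConvTo (f x).1 x := by
  obtain ⟨s, hs, hconv⟩ := (f x).2.2.2
  have hxs : SOrd x s := (hf x (f x) s hs).mp subset_rfl
  have hsx : SOrd s x := hs.2 x (hf.subset_dnSet x)
  rwa [hsx.antisymm hxs] at hconv

theorem isDirectedSpace [T0Space X] (hf : IsLowerAdjointOfSup f) (hcont : Continuous f) :
    IsDirectedSpace X := by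
  refine ⟨inferInstance, fun U hU => ?_⟩
  have hU_eq : U = f ⁻¹' {A | (A.1 ∩ U).Nonempty} := by
    ext x
    refine ⟨fun hx => hU (f x).1 x (f x).2.1 (hf.convTo x) hx, ?_⟩
    rintro ⟨a, haf, haU⟩
    exact hU.mem_of_sOrd haU (hf.subset_dnSet x haf)
  rw [hU_eq]
  exact (TopIdeal.isOpen_setOf_inter_nonempty U).preimage hcont

theorem subset_wbSet (hf : IsLowerAdjointOfSup f) (hcont : Continuous f) (x : X) :
    (f x).1 ⊆ wbSet x := by
  intro a ha D hdir hconv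
  obtain ⟨d, hd, had⟩ := hconv _ ((TopIdeal.isOpen_setOf_mem a).preimage hcont) ha
  exact ⟨d, hd, hf.subset_dnSet d had⟩

theorem isContinuousSpace [T0Space X] (hf : IsLowerAdjointOfSup f) (hcont : Continuous f) :
    IsContinuousSpace X :=
  ⟨hf.isDirectedSpace hcont, fun x =>
    ⟨(f x).1, hf.subset_wbSet hcont x, (f x).2.1, hf.convTo x⟩⟩

end IsLowerAdjointOfSup

/-- a T0 space is a continuous space iff the supremum map
`⋁ : I_T(X) → X` has a continuous lower adjoint. -/
theorem continuous_iff_sup_has_lower_adjoint (X : Type*) [TopologicalSpace X] [T0Space X] :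
    IsContinuousSpace X ↔
      ∃ f : X → TopIdeal X, Continuous f ∧
        ∀ (x : X) (A : TopIdeal X) (s : X), IsSupOf s A.1 →
          ((f x).1 ⊆ A.1 ↔ SOrd x s) :=
  ⟨fun h => ⟨HasApproximations.wbIdeal h.2, HasApproximations.continuous_wbIdeal h,
      HasApproximations.isLowerAdjointOfSup_wbIdeal h.2⟩,
    fun ⟨_, hcont, hf⟩ => IsLowerAdjointOfSup.isContinuousSpace hf hcont⟩
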